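/- arXiv:1809.07745 — 2 statements merged into one kernel-verified Lean document; each statement's English description precedes it below -/
import Mathlib

section
/- Let X be a topological space, (Y,d) a metric space, Φ : X → Set Y a lower semi-continuous mapping with nonempty values, and ε > 0. Then the mapping x ↦ O_ε(Φ(x)) (the open ε-neighbourhood of Φ(x)) is lower locally constant. -/
open Metric Set

/-- `S ↪ₖ B`: every continuous map of the `k`-sphere (unit sphere of `ℝ^{k+1}`) into `S`
extends to a continuous map of the closed unit `(k+1)`-ball into `B`. -/
def EmbedK {Y : Type*} [TopologicalSpace Y] (k : ℕ) (S B : Set Y) : Prop :=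
  ∀ g : sphere (0 : EuclideanSpace ℝ (Fin (k + 1))) 1 → Y,
    Continuous g → (∀ p, g p ∈ S) →
      ∃ h : closedBall (0 : EuclideanSpace ℝ (Fin (k + 1))) 1 → Y,
        Continuous h ∧ (∀ p, h p ∈ B) ∧
          ∀ p : sphere (0 : EuclideanSpace ℝ (Fin (k + 1))) 1,
            h ⟨p.1, sphere_subset_closedBall p.2⟩ = g p

/-- Lower semi-continuity of a set-valued mapping. -/
def LSC {X Y : Type*} [TopologicalSpace X] [TopologicalSpace Y] (Φ : X → Set Y) : Prop :=
  ∀ U : Set Y, IsOpen U → IsOpen {x | (Φ x ∩ U).Nonempty}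

/-- Lower locally constant set-valued mapping. -/
def LowerLocallyConstant {X Y : Type*} [TopologicalSpace X] [TopologicalSpace Y]
    (φ : X → Set Y) : Prop :=
  ∀ K : Set Y, IsCompact K → IsOpen {x | K ⊆ φ x}

/-- `dim X ≤ m`: every open cover has an open refinement (still a cover) such that any
`m + 2` pairwise distinct members of the refinement have empty intersection. -/
def DimLE (X : Type*) [TopologicalSpace X] (m : ℤ) : Prop :=
  ∀ 𝒰 : Set (Set X), (∀ U ∈ 𝒰, IsOpen U) → ⋃₀ 𝒰 = univ →
    ∃ 𝒱 : Set (Set X), (∀ V ∈ 𝒱, IsOpen V) ∧ ⋃₀ 𝒱 = univ ∧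
      (∀ V ∈ 𝒱, ∃ U ∈ 𝒰, V ⊆ U) ∧
      ∀ σ : Finset (Set X), ↑σ ⊆ 𝒱 → (σ.card : ℤ) = m + 2 → ⋂₀ (σ : Set (Set X)) = ∅

/-- The open `ε`-neighbourhood `O_ε(S)` of a set `S` in a metric space. -/
def ONbhd {Y : Type*} [PseudoMetricSpace Y] (ε : ℝ) (S : Set Y) : Set Y :=
  ⋃ y ∈ S, ball y ε

/-! If `y` lies within `ε` of a point `z ∈ Φ x₀`, lower semicontinuity provides points of `Φ x`
close to `z` for all `x` near `x₀`, so the graph of `x ↦ O_ε(Φ x)` is open in `X × Y`. A set-valued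
mapping with open graph is lower locally constant by the tube lemma for the compact set `K`. -/

open Filter Topology

theorem LowerLocallyConstant.of_isOpen_graph {X Y : Type*} [TopologicalSpace X]
    [TopologicalSpace Y] {φ : X → Set Y} (h : IsOpen {p : X × Y | p.2 ∈ φ p.1}) :
    LowerLocallyConstant φ := fun _K hK =>
  isOpen_iff_mem_nhds.2 fun _x₀ hx₀ =>
    hK.eventually_forall_of_forall_eventually fun _y hy => h.mem_nhds (hx₀ hy)

theorem LSC.isOpen_graph_oNbhd {X Y : Type*} [TopologicalSpace X] [PseudoMetricSpace Y]
    {Φ : X → Set Y} (hΦ : LSC Φ) (ε : ℝ) :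
    IsOpen {p : X × Y | p.2 ∈ ONbhd ε (Φ p.1)} := by
  refine isOpen_iff_mem_nhds.2 fun ⟨x₀, y⟩ hy => ?_
  obtain ⟨z, hz, hyz⟩ : ∃ z ∈ Φ x₀, dist y z < ε := by simpa [ONbhd] using hy
  set δ := (ε - dist y z) / 2 with hδ_def
  have hδ : 0 < δ := by linarith
  have hnear : {x | (Φ x ∩ ball z δ).Nonempty} ∈ 𝓝 x₀ :=
    (hΦ _ isOpen_ball).mem_nhds ⟨z, hz, mem_ball_self hδ⟩
  filter_upwards [prod_mem_nhds hnear (ball_mem_nhds y hδ)]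
    with ⟨x, y'⟩ ⟨⟨w, hw, hwz⟩, hy'⟩
  refine mem_biUnion hw (mem_ball.2 ?_)
  calc dist y' w ≤ dist y' y + dist y z + dist z w := dist_triangle4 _ _ _ _
    _ < δ + dist y z + δ := by
      gcongr
      · exact mem_ball.1 hy'
      · exact mem_ball'.1 hwz
    _ = ε := by rw [hδ_def]; ring

theorem lsc_neighbourhood_lowerLocallyConstant_general
    {X Y : Type*} [TopologicalSpace X] [MetricSpace Y]
    (Φ : X → Set Y) (hlsc : LSC Φ)
    (ε : ℝ) :
    LowerLocallyConstant (fun x => ONbhd ε (Φ x)) :=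
  .of_isOpen_graph (hlsc.isOpen_graph_oNbhd ε)

/-- Proposition 5.2: the open ε-neighbourhood of an l.s.c. mapping is lower locally
constant. -/
theorem lsc_neighbourhood_lowerLocallyConstant
    {X Y : Type*} [TopologicalSpace X] [MetricSpace Y]
    (Φ : X → Set Y) (hne : ∀ x, (Φ x).Nonempty) (hlsc : LSC Φ)
    (ε : ℝ) (hε : 0 < ε) :
    LowerLocallyConstant (fun x => ONbhd ε (Φ x)) :=
  lsc_neighbourhood_lowerLocallyConstant_general Φ hlsc ε
end

section
/- Let X be a topological space, (Y,d) a complete metric space, ξ : (0,∞) → (0,∞) a function with ξ(ε) ≤ ε for all ε > 0, and Φ : X → Set Y a mapping with nonempty values such that: for every ε > 0, every continuous ξ(ε)-selection g : X → Y for Φ, and every μ > 0, the mapping x ↦ O_μ(Φ(x)) ∩ O_ε(g(x)) has a continuous selection. Then for every ε > 0 and every continuous ξ(ε/2)-selection g : X → Y for Φ, the mapping x ↦ closure(Φ(x)) ∩ O_ε(g(x)) has a continuous selection. -/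
open Metric Set

/-
Iterating the hypothesis with tolerances `ε / 2 / 2 ^ n` (and `μ = ξ` of the next tolerance)
produces continuous maps `F 0 = g, F 1, F 2, …` with `F n` a `ξ(ε / 2 / 2 ^ n)`-selection of `Φ`
and `dist (F n x) (F (n + 1) x) < ε / 2 / 2 ^ n`. This sequence is uniformly Cauchy, so it
converges uniformly to a continuous map `f` with `dist (F n x) (f x) ≤ ε / 2 ^ n`. Since
`ξ(δ) ≤ δ`, the points `F n x` approach `Φ x`, hence `f x ∈ closure (Φ x)`, and comparing with
`F 1` gives `dist (f x) (g x) < ε / 2 + ε / 2`.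
-/

open Filter Topology

theorem ONbhd_eq_thickening {Y : Type*} [PseudoMetricSpace Y] (ε : ℝ) (S : Set Y) :
    ONbhd ε S = thickening ε S :=
  thickening_eq_biUnion_ball.symm

theorem exists_seq_of_forall_exists_succ {α : Type*} {P : ℕ → α → Prop}
    {R : ℕ → α → α → Prop} {a₀ : α} (h₀ : P 0 a₀)
    (hstep : ∀ n a, P n a → ∃ b, P (n + 1) b ∧ R n a b) :
    ∃ u : ℕ → α, u 0 = a₀ ∧ ∀ n, P n (u n) ∧ R n (u n) (u (n + 1)) := by
  choose! next hnextP hnextR using hstep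
  let u : ℕ → α := fun n => Nat.rec a₀ next n
  have hu : ∀ n, P n (u n) := fun n => by
    induction n with
    | zero => exact h₀
    | succ n ih => exact hnextP n (u n) ih
  exact ⟨u, rfl, fun n => ⟨hu n, hnextR n (u n) (hu n)⟩⟩

section Metric

variable {Y : Type*} [PseudoMetricSpace Y]

theorem mem_thickening_add_of_dist_le {S : Set Y} {x y : Y} {δ ε : ℝ} (hxy : dist x y ≤ δ)
    (hy : y ∈ thickening ε S) : x ∈ thickening (δ + ε) S := by
  obtain ⟨z, hz, hyz⟩ := mem_thickening_iff.1 hy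
  exact mem_thickening_iff.2 ⟨z, hz, by linarith [dist_triangle x y z]⟩

theorem mem_closure_of_forall_mem_thickening {S : Set Y} {x : Y} {u : ℕ → ℝ}
    (hu : Tendsto u atTop (𝓝 0)) (hx : ∀ n, x ∈ thickening (u n) S) : x ∈ closure S := by
  rw [closure_eq_iInter_thickening, mem_iInter₂]
  intro δ hδ
  obtain ⟨n, hn⟩ := (hu.eventually (gt_mem_nhds hδ)).exists
  exact thickening_mono hn.le S (hx n)

theorem tendsto_const_div_two_pow (C : ℝ) : Tendsto (fun n : ℕ => C / 2 ^ n) atTop (𝓝 0) :=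
  tendsto_const_nhds.div_atTop (tendsto_pow_atTop_atTop_of_one_lt one_lt_two)

end Metric

section Limit

variable {X Y : Type*} [TopologicalSpace X] [PseudoMetricSpace Y] [CompleteSpace Y]

theorem exists_continuous_limit_of_dist_le_geometric_two {F : ℕ → X → Y}
    (hF : ∀ n, Continuous (F n)) {C : ℝ}
    (hdist : ∀ n x, dist (F n x) (F (n + 1) x) ≤ C / 2 / 2 ^ n) :
    ∃ f : X → Y, Continuous f ∧ ∀ n x, dist (F n x) (f x) ≤ C / 2 ^ n := by
  choose f hf using fun x =>
    cauchySeq_tendsto_of_complete (cauchySeq_of_le_geometric_two (hdist · x))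
  have hFf : ∀ n x, dist (F n x) (f x) ≤ C / 2 ^ n := fun n x =>
    dist_le_of_le_geometric_two_of_tendsto (hdist · x) (hf x) n
  have hunif : TendstoUniformly F f atTop := by
    rw [Metric.tendstoUniformly_iff]
    intro δ hδ
    filter_upwards [(tendsto_const_div_two_pow C).eventually (gt_mem_nhds hδ)] with n hn x
    rw [dist_comm]
    exact (hFf n x).trans_lt hn
  exact ⟨f, hunif.continuous (Frequently.of_forall hF), hFf⟩

theorem exists_selection_closure_of_approx_seq {Φ : X → Set Y} {F : ℕ → X → Y} {ε : ℝ}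
    (hF : ∀ n, Continuous (F n)) (hFΦ : ∀ n x, F n x ∈ thickening (ε / 2 / 2 ^ n) (Φ x))
    (hdist : ∀ n x, dist (F n x) (F (n + 1) x) < ε / 2 / 2 ^ n) :
    ∃ f : X → Y, Continuous f ∧ ∀ x, f x ∈ closure (Φ x) ∩ ball (F 0 x) ε := by
  obtain ⟨f, hf, hFf⟩ :=
    exists_continuous_limit_of_dist_le_geometric_two hF fun n x => (hdist n x).le
  refine ⟨f, hf, fun x => ⟨?_, ?_⟩⟩
  · exact mem_closure_of_forall_mem_thickening
      (by simpa using (tendsto_const_div_two_pow ε).add (tendsto_const_div_two_pow (ε / 2)))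
      fun n => mem_thickening_add_of_dist_le (dist_comm (f x) (F n x) ▸ hFf n x) (hFΦ n x)
  · calc dist (f x) (F 0 x) ≤ dist (f x) (F 1 x) + dist (F 1 x) (F 0 x) := dist_triangle _ _ _
      _ = dist (F 1 x) (f x) + dist (F 0 x) (F 1 x) := by rw [dist_comm (f x), dist_comm (F 0 x)]
      _ < ε / 2 ^ 1 + ε / 2 / 2 ^ 0 := add_lt_add_of_le_of_lt (hFf 1 x) (hdist 0 x)
      _ = ε := by ring

end Limit

theorem approximate_to_exact_selection_general
    {X Y : Type*} [TopologicalSpace X] [MetricSpace Y] [CompleteSpace Y]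
    (ξ : ℝ → ℝ) (hξpos : ∀ ε > 0, 0 < ξ ε) (hξle : ∀ ε > 0, ξ ε ≤ ε)
    (Φ : X → Set Y)
    (H : ∀ ε > (0 : ℝ), ∀ g : X → Y, Continuous g →
      (∀ x, g x ∈ ONbhd (ξ ε) (Φ x)) → ∀ μ > (0 : ℝ),
        ∃ f : X → Y, Continuous f ∧ ∀ x, f x ∈ ONbhd μ (Φ x) ∩ ball (g x) ε) :
    ∀ ε > (0 : ℝ), ∀ g : X → Y, Continuous g →
      (∀ x, g x ∈ ONbhd (ξ (ε / 2)) (Φ x)) →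
      ∃ f : X → Y, Continuous f ∧ ∀ x, f x ∈ closure (Φ x) ∩ ball (g x) ε := by
  intro ε hε g hg hgΦ
  simp only [ONbhd_eq_thickening] at H hgΦ
  have htol : ∀ n : ℕ, 0 < ε / 2 / 2 ^ n := fun n => by positivity
  obtain ⟨F, rfl, hF⟩ := exists_seq_of_forall_exists_succ
    (P := fun n h => Continuous h ∧ ∀ x, h x ∈ thickening (ξ (ε / 2 / 2 ^ n)) (Φ x))
    (R := fun n h h' => ∀ x, dist (h x) (h' x) < ε / 2 / 2 ^ n)
    ⟨hg, by simpa using hgΦ⟩ fun n h ⟨hc, hΦ⟩ => by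
      obtain ⟨f, hfc, hf⟩ := H _ (htol n) h hc hΦ _ (hξpos _ (htol (n + 1)))
      exact ⟨f, ⟨hfc, fun x => (hf x).1⟩, fun x => by rw [dist_comm]; exact (hf x).2⟩
  exact exists_selection_closure_of_approx_seq (fun n => (hF n).1.1)
    (fun n x => thickening_mono (hξle _ (htol n)) _ ((hF n).1.2 x)) fun n => (hF n).2

/-- Proposition 5.3. -/
theorem approximate_to_exact_selection
    {X Y : Type*} [TopologicalSpace X] [MetricSpace Y] [CompleteSpace Y]
    (ξ : ℝ → ℝ) (hξpos : ∀ ε > 0, 0 < ξ ε) (hξle : ∀ ε > 0, ξ ε ≤ ε)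
    (Φ : X → Set Y) (hne : ∀ x, (Φ x).Nonempty)
    (H : ∀ ε > (0 : ℝ), ∀ g : X → Y, Continuous g →
      (∀ x, g x ∈ ONbhd (ξ ε) (Φ x)) → ∀ μ > (0 : ℝ),
        ∃ f : X → Y, Continuous f ∧ ∀ x, f x ∈ ONbhd μ (Φ x) ∩ ball (g x) ε) :
    ∀ ε > (0 : ℝ), ∀ g : X → Y, Continuous g →
      (∀ x, g x ∈ ONbhd (ξ (ε / 2)) (Φ x)) →
      ∃ f : X → Y, Continuous f ∧ ∀ x, f x ∈ closure (Φ x) ∩ ball (g x) ε :=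
  approximate_to_exact_selection_general ξ hξpos hξle Φ H
end
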